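/- Let A ∈ ℝ^{d×d}, B ∈ ℝ^{d×k}, and K ∈ ℝ^{k×d} with ‖K‖ ≤ κ, such that M = A + BK is (κ,γ)-strongly stable. Let Q ∈ ℝ^{d×d} and R ∈ ℝ^{k×k} be symmetric positive semidefinite with ‖Q‖ ≤ α₁ and ‖R‖ ≤ α₁, and let P be a symmetric positive definite matrix satisfying the Lyapunov equation P = Q + KᵀRK + MᵀPM. Fix x_1 ∈ ℝ^d, let w_1, w_2, … be i.i.d. centered Gaussian vectors in ℝ^d with covariance σ²I, and define x_{s+1} = M x_s + w_s. Then for every integer t ≥ 1, E[Σ_{s=1}^t x_sᵀ(Q + KᵀRK)x_s] ≤ t·σ²·tr(P) + (2α₁κ⁴/γ)·‖x_1‖². -/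

import Mathlib

noncomputable section

/-- The operator (spectral) norm of a real matrix: the operator norm of the induced
linear map between Euclidean spaces. -/
def opNorm {m n : ℕ} (A : Matrix (Fin m) (Fin n) ℝ) : ℝ :=
  ‖LinearMap.toContinuousLinearMap (Matrix.toEuclideanLin A)‖

/-- Euclidean norm of a vector in `ℝ^d`. -/
def vnorm {d : ℕ} (x : Fin d → ℝ) : ℝ := Real.sqrt (∑ i, x i ^ 2)

/-- A matrix `M` is `(κ,γ)`-strongly stable (for `κ ≥ 1` and `0 < γ ≤ 1`) if
`M = H L H⁻¹` for some invertible `H` and some `L` with `‖L‖ ≤ 1 − γ` and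
`‖H‖·‖H⁻¹‖ ≤ κ`, where `‖·‖` is the operator (spectral) norm. -/
def StronglyStable {d : ℕ} (κ γ : ℝ) (M : Matrix (Fin d) (Fin d) ℝ) : Prop :=
  1 ≤ κ ∧ 0 < γ ∧ γ ≤ 1 ∧
    ∃ H L : Matrix (Fin d) (Fin d) ℝ, IsUnit H ∧ M = H * L * H⁻¹ ∧
      opNorm L ≤ 1 - γ ∧ opNorm H * opNorm H⁻¹ ≤ κ


open MeasureTheory ProbabilityTheory Matrix

/-- The trajectory `x_{s+1} = M x_s + w_s` (noise indexed from 1) started at `x 1 = x₁`. -/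
def stateTraj {d : ℕ} (M : Matrix (Fin d) (Fin d) ℝ) (x₁ : Fin d → ℝ)
    (w : ℕ → Fin d → ℝ) : ℕ → Fin d → ℝ
  | 0 => x₁
  | 1 => x₁
  | s + 2 => M.mulVec (stateTraj M x₁ w (s + 1)) + w (s + 1)

/-- Extend finitely many noise vectors `(w_1, …, w_t)` to a sequence indexed by `ℕ`. -/
def noiseExt {t d : ℕ} (g : Fin t → Fin d → ℝ) : ℕ → Fin d → ℝ := fun s =>
  if h : 1 ≤ s ∧ s ≤ t then g ⟨s - 1, by omega⟩ else 0

/-!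
Writing `M = A + BK` and `S = Q + KᵀRK`, the state is affine in the noise,
`x_{n+1} = Mⁿ x₁ + ∑_{e<n} Mᵉ w_{n-e}`, and for isotropic noise of variance `v` the expected
quadratic form of an affine image `u + Cξ` is `uᵀSu + v·tr(CᵀSC)`. Hence the expected cost is
`∑_{n<t} (x₁ᵀ (Mⁿ)ᵀ S Mⁿ x₁ + σ² ∑_{e<n} tr((Mᵉ)ᵀ S Mᵉ))`. Unrolling the Lyapunov equation gives
`P = ∑_{e<n} (Mᵉ)ᵀ S Mᵉ + (Mⁿ)ᵀ P Mⁿ` with a positive semidefinite remainder, which bounds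
the first part by `x₁ᵀ P x₁` and each inner trace sum by `tr P`. Finally strong stability gives
`‖Mⁿ‖ ≤ κ (1-γ)ⁿ`, so letting `n → ∞` in the same identity yields
`‖P‖ ≤ ‖S‖ κ² / (1 - (1-γ)²) ≤ 2 α₁ κ⁴ / γ`.
-/

open scoped NNReal Matrix.Norms.L2Operator

section MatrixAlgebra

variable {m n : Type*}

lemma dotProduct_mulVec_eq_sum [Fintype m] (S : Matrix m m ℝ) (x y : m → ℝ) :
    x ⬝ᵥ S *ᵥ y = ∑ k, ∑ l, S k l * (x k * y l) := by
  simp only [dotProduct, mulVec, Finset.mul_sum]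
  exact Finset.sum_congr rfl fun k _ => Finset.sum_congr rfl fun l _ => by ring

lemma affine_dotProduct_mulVec_eq_sum [Fintype m] [Fintype n] (u : m → ℝ) (C : Matrix m n ℝ)
    (S : Matrix m m ℝ) (x : n → ℝ) :
    (u + C *ᵥ x) ⬝ᵥ S *ᵥ (u + C *ᵥ x)
      = ∑ k, ∑ l, S k l * ((u k + C k ⬝ᵥ x) * (u l + C l ⬝ᵥ x)) :=
  dotProduct_mulVec_eq_sum S _ _

lemma mulVec_dotProduct_mulVec_mulVec [Fintype m] [Fintype n] (A : Matrix m n ℝ)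
    (S : Matrix m m ℝ) (x : n → ℝ) :
    (A *ᵥ x) ⬝ᵥ S *ᵥ (A *ᵥ x) = x ⬝ᵥ (Aᵀ * S * A) *ᵥ x := by
  rw [← mulVec_mulVec, ← mulVec_mulVec, dotProduct_mulVec x, vecMul_transpose, dotProduct_comm,
    dotProduct_mulVec]

lemma trace_transpose_mul_mul [Fintype m] [Fintype n] (C : Matrix m n ℝ) (S : Matrix m m ℝ) :
    trace (Cᵀ * S * C) = ∑ k, ∑ l, S k l * (C k ⬝ᵥ C l) := by
  simp only [trace, diag, mul_apply, transpose_apply, dotProduct, Finset.mul_sum, Finset.sum_mul]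
  rw [Finset.sum_comm]
  conv_rhs => rw [Finset.sum_comm]
  refine Finset.sum_congr rfl fun l _ => ?_
  rw [Finset.sum_comm]
  exact Finset.sum_congr rfl fun k _ => Finset.sum_congr rfl fun p _ => by ring

lemma Matrix.PosSemidef.transpose_mul_mul_same [Fintype m] [Finite n] {P : Matrix m m ℝ}
    (hP : P.PosSemidef) (A : Matrix m n ℝ) : (Aᵀ * P * A).PosSemidef := by
  simpa using hP.conjTranspose_mul_mul_same A

/-- The block row `[N a₁ N a₂ ⋯]`: column `(a, i)` is column `i` of block `a`. -/
def blockRow {α R : Type*} (N : α → Matrix m n R) : Matrix m (α × n) R :=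
  Matrix.of fun k p => N p.1 k p.2

lemma blockRow_mulVec {α : Type*} [Fintype n] [Fintype α] (N : α → Matrix m n ℝ)
    (x : α × n → ℝ) :
    blockRow N *ᵥ x = ∑ a, N a *ᵥ fun i => x (a, i) := by
  ext k
  simp [blockRow, mulVec, dotProduct, Fintype.sum_prod_type, Finset.sum_apply]

lemma trace_blockRow {α : Type*} [Fintype m] [Fintype n] [Fintype α] (N : α → Matrix m n ℝ)
    (S : Matrix m m ℝ) :
    trace ((blockRow N)ᵀ * S * blockRow N) = ∑ a, trace ((N a)ᵀ * S * N a) := by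
  simp only [trace, diag, Fintype.sum_prod_type]
  rfl

end MatrixAlgebra

section OperatorNorm

lemma opNorm_eq_norm {m n : ℕ} (A : Matrix (Fin m) (Fin n) ℝ) : opNorm A = ‖A‖ := rfl

lemma norm_pow_mul_le {R : Type*} [SeminormedRing R] (a b : R) (n : ℕ) :
    ‖a ^ n * b‖ ≤ ‖a‖ ^ n * ‖b‖ := by
  induction n with
  | zero => simp
  | succ n ih =>
    rw [pow_succ', mul_assoc, pow_succ', mul_assoc]
    exact (norm_mul_le _ _).trans (mul_le_mul_of_nonneg_left ih (norm_nonneg a))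

variable {m n : Type*} [Fintype m] [DecidableEq m] [Fintype n] [DecidableEq n]

lemma norm_transpose_mul_mul_le (A : Matrix m n ℝ) (S : Matrix m m ℝ) :
    ‖Aᵀ * S * A‖ ≤ ‖A‖ ^ 2 * ‖S‖ := by
  calc ‖Aᵀ * S * A‖ ≤ ‖Aᵀ‖ * ‖S‖ * ‖A‖ :=
        (l2_opNorm_mul _ _).trans (mul_le_mul_of_nonneg_right (l2_opNorm_mul _ _) (norm_nonneg _))
    _ = ‖A‖ ^ 2 * ‖S‖ := by
      rw [← conjTranspose_eq_transpose_of_trivial, l2_opNorm_conjTranspose]; ring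

lemma norm_add_transpose_mul_mul_le {κ α : ℝ} {Q : Matrix n n ℝ} {K : Matrix m n ℝ}
    {R : Matrix m m ℝ} (hκ : 1 ≤ κ) (hK : ‖K‖ ≤ κ) (hQ : ‖Q‖ ≤ α) (hR : ‖R‖ ≤ α) :
    ‖Q + Kᵀ * R * K‖ ≤ 2 * α * κ ^ 2 := by
  have hα : 0 ≤ α := (norm_nonneg Q).trans hQ
  have hKRK : ‖Kᵀ * R * K‖ ≤ κ ^ 2 * α := (norm_transpose_mul_mul_le K R).trans
    (mul_le_mul (pow_le_pow_left₀ (norm_nonneg K) hK 2) hR (norm_nonneg R) (sq_nonneg κ))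
  have hQκ : α ≤ α * κ ^ 2 := le_mul_of_one_le_right hα (one_le_pow₀ hκ)
  linarith [norm_add_le Q (Kᵀ * R * K)]

lemma dotProduct_mulVec_le (A : Matrix m m ℝ) (x : m → ℝ) :
    x ⬝ᵥ A *ᵥ x ≤ ‖A‖ * ∑ i, x i ^ 2 := by
  have hx : ‖WithLp.toLp 2 x‖ ^ 2 = ∑ i, x i ^ 2 := by simp [EuclideanSpace.norm_sq_eq]
  calc x ⬝ᵥ A *ᵥ x = inner ℝ (WithLp.toLp 2 x) (WithLp.toLp 2 (A *ᵥ x)) := by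
        rw [EuclideanSpace.inner_toLp_toLp, star_trivial, dotProduct_comm]
    _ ≤ ‖WithLp.toLp 2 x‖ * ‖WithLp.toLp 2 (A *ᵥ x)‖ := real_inner_le_norm _ _
    _ ≤ ‖WithLp.toLp 2 x‖ * (‖A‖ * ‖WithLp.toLp 2 x‖) :=
        mul_le_mul_of_nonneg_left (l2_opNorm_mulVec A _) (norm_nonneg _)
    _ = ‖A‖ * ∑ i, x i ^ 2 := by rw [← hx]; ring

end OperatorNorm

lemma StronglyStable.norm_pow_le {d : ℕ} {κ γ : ℝ} {M : Matrix (Fin d) (Fin d) ℝ}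
    (h : StronglyStable κ γ M) (n : ℕ) : ‖M ^ n‖ ≤ κ * (1 - γ) ^ n := by
  obtain ⟨-, -, hγ1, H, L, ⟨u, rfl⟩, rfl, hL, hHH⟩ := h
  simp only [opNorm_eq_norm] at hL hHH
  set U : Matrix (Fin d) (Fin d) ℝ := ↑u
  rw [← coe_units_inv, Units.conj_pow, Matrix.mul_assoc, coe_units_inv]
  calc ‖U * (L ^ n * U⁻¹)‖ ≤ ‖U‖ * (‖L‖ ^ n * ‖U⁻¹‖) :=
        (norm_mul_le _ _).trans (mul_le_mul_of_nonneg_left (norm_pow_mul_le _ _ _) (norm_nonneg _))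
    _ = (‖U‖ * ‖U⁻¹‖) * ‖L‖ ^ n := by ring
    _ ≤ κ * (1 - γ) ^ n :=
        mul_le_mul hHH (pow_le_pow_left₀ (norm_nonneg _) hL n) (by positivity)
          ((by positivity : (0 : ℝ) ≤ _).trans hHH)

section Lyapunov

variable {m : Type*} [Fintype m] [DecidableEq m] {M S P : Matrix m m ℝ}

lemma lyapunov_eq_sum_add (hP : P = S + Mᵀ * P * M) (n : ℕ) :
    P = ∑ e ∈ Finset.range n, (M ^ e)ᵀ * S * M ^ e + (M ^ n)ᵀ * P * M ^ n := by
  induction n with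
  | zero => simp
  | succ n ih =>
    have hstep : (M ^ (n + 1))ᵀ * P * M ^ (n + 1) = (M ^ n)ᵀ * (Mᵀ * P * M) * M ^ n := by
      simp only [pow_succ', transpose_mul, Matrix.mul_assoc]
    rw [Finset.sum_range_succ, add_assoc, hstep, ← Matrix.add_mul, ← Matrix.mul_add, ← hP]
    exact ih

lemma sum_trace_le_of_lyapunov (hP : P = S + Mᵀ * P * M) (hPsd : P.PosSemidef) (n : ℕ) :
    ∑ e ∈ Finset.range n, trace ((M ^ e)ᵀ * S * M ^ e) ≤ trace P := by
  conv_rhs => rw [lyapunov_eq_sum_add hP n, trace_add, trace_sum]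
  exact le_add_of_nonneg_right (hPsd.transpose_mul_mul_same _).trace_nonneg

lemma dotProduct_sum_mulVec_le_of_lyapunov (hP : P = S + Mᵀ * P * M) (hPsd : P.PosSemidef)
    (n : ℕ) (x : m → ℝ) :
    x ⬝ᵥ (∑ e ∈ Finset.range n, (M ^ e)ᵀ * S * M ^ e) *ᵥ x ≤ x ⬝ᵥ P *ᵥ x := by
  conv_rhs => rw [lyapunov_eq_sum_add hP n, add_mulVec, dotProduct_add]
  simpa using (hPsd.transpose_mul_mul_same (M ^ n)).dotProduct_mulVec_nonneg x

lemma sum_cost_le_of_lyapunov (hP : P = S + Mᵀ * P * M) (hPsd : P.PosSemidef) {v : ℝ}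
    (hv : 0 ≤ v) (x : m → ℝ) (t : ℕ) :
    ∑ n ∈ Finset.range t, ((M ^ n *ᵥ x) ⬝ᵥ S *ᵥ (M ^ n *ᵥ x)
        + v * ∑ e ∈ Finset.range n, trace ((M ^ e)ᵀ * S * M ^ e))
      ≤ x ⬝ᵥ P *ᵥ x + t * v * trace P := by
  rw [Finset.sum_add_distrib]
  refine add_le_add ?_ ?_
  · simp_rw [mulVec_dotProduct_mulVec_mulVec, ← dotProduct_sum, ← sum_mulVec]
    exact dotProduct_sum_mulVec_le_of_lyapunov hP hPsd t x
  · calc ∑ n ∈ Finset.range t, v * ∑ e ∈ Finset.range n, trace ((M ^ e)ᵀ * S * M ^ e)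
        ≤ ∑ _n ∈ Finset.range t, v * trace P :=
          Finset.sum_le_sum fun n _ =>
            mul_le_mul_of_nonneg_left (sum_trace_le_of_lyapunov hP hPsd n) hv
      _ = t * v * trace P := by simp [mul_assoc]

lemma norm_le_of_lyapunov {κ ρ : ℝ} (hP : P = S + Mᵀ * P * M) (hρ : 0 ≤ ρ) (hρ1 : ρ < 1)
    (hM : ∀ n, ‖M ^ n‖ ≤ κ * ρ ^ n) : ‖P‖ ≤ ‖S‖ * κ ^ 2 / (1 - ρ ^ 2) := by
  have hr0 : 0 ≤ ρ ^ 2 := sq_nonneg ρ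
  have hr1 : ρ ^ 2 < 1 := by nlinarith
  have hterm : ∀ (X : Matrix m m ℝ) n, ‖(M ^ n)ᵀ * X * M ^ n‖ ≤ ‖X‖ * κ ^ 2 * (ρ ^ 2) ^ n :=
    fun X n => by
      have hMn := pow_le_pow_left₀ (norm_nonneg _) (hM n) 2
      calc ‖(M ^ n)ᵀ * X * M ^ n‖ ≤ ‖M ^ n‖ ^ 2 * ‖X‖ := norm_transpose_mul_mul_le _ _
        _ ≤ (κ * ρ ^ n) ^ 2 * ‖X‖ := by gcongr
        _ = ‖X‖ * κ ^ 2 * (ρ ^ 2) ^ n := by ring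
  have hbound : ∀ n, ‖P‖ ≤ ‖S‖ * κ ^ 2 / (1 - ρ ^ 2) + ‖P‖ * κ ^ 2 * (ρ ^ 2) ^ n := fun n => by
    calc ‖P‖ ≤ ∑ e ∈ Finset.range n, ‖(M ^ e)ᵀ * S * M ^ e‖ + ‖(M ^ n)ᵀ * P * M ^ n‖ := by
          conv_lhs => rw [lyapunov_eq_sum_add hP n]
          exact (norm_add_le _ _).trans (add_le_add_left (norm_sum_le _ _) _)
      _ ≤ ‖S‖ * κ ^ 2 * ∑ e ∈ Finset.range n, (ρ ^ 2) ^ e + ‖P‖ * κ ^ 2 * (ρ ^ 2) ^ n := by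
          rw [Finset.mul_sum]
          exact add_le_add (Finset.sum_le_sum fun e _ => hterm S e) (hterm P n)
      _ ≤ _ := by
          rw [← mul_one_div _ (1 - ρ ^ 2), Finset.range_eq_Ico]
          gcongr
          simpa using geom_sum_Ico_le_of_lt_one (m := 0) (n := n) hr0 hr1
  have hlim : Filter.Tendsto (fun n : ℕ => ‖S‖ * κ ^ 2 / (1 - ρ ^ 2) + ‖P‖ * κ ^ 2 * (ρ ^ 2) ^ n)
      Filter.atTop (nhds (‖S‖ * κ ^ 2 / (1 - ρ ^ 2) + ‖P‖ * κ ^ 2 * 0)) :=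
    (tendsto_pow_atTop_nhds_zero_of_lt_one hr0 hr1).const_mul _ |>.const_add _
  simpa using ge_of_tendsto' hlim hbound

end Lyapunov

structure IsWhiteNoise {Ω ι : Type*} [MeasurableSpace Ω] (μ : Measure Ω) (ξ : Ω → ι → ℝ)
    (v : ℝ) : Prop where
  memLp : ∀ i, MemLp (fun ω => ξ ω i) 2 μ
  integral_eq_zero : ∀ i, ∫ ω, ξ ω i ∂μ = 0
  integral_mul_self : ∀ i, ∫ ω, ξ ω i * ξ ω i ∂μ = v
  integral_mul_of_ne : ∀ i j, i ≠ j → ∫ ω, ξ ω i * ξ ω j ∂μ = 0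

namespace IsWhiteNoise

variable {Ω ι : Type*} [MeasurableSpace Ω] {μ : Measure Ω} {ξ : Ω → ι → ℝ} {v : ℝ}

lemma comp_injective (h : IsWhiteNoise μ ξ v) {κ : Type*} {f : κ → ι} (hf : f.Injective) :
    IsWhiteNoise μ (fun ω k => ξ ω (f k)) v where
  memLp k := h.memLp (f k)
  integral_eq_zero k := h.integral_eq_zero (f k)
  integral_mul_self k := h.integral_mul_self (f k)
  integral_mul_of_ne _ _ hkl := h.integral_mul_of_ne _ _ (hf.ne hkl)

lemma pi [IsProbabilityMeasure μ] (h : IsWhiteNoise μ ξ v) (κ : Type*) [Fintype κ] :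
    IsWhiteNoise (Measure.pi fun _ : κ => μ) (fun g (p : κ × ι) => ξ (g p.1) p.2) v := by
  have hcomp : ∀ {f : Ω → ℝ}, AEStronglyMeasurable f μ → ∀ j : κ,
      ∫ g, f (g j) ∂(Measure.pi fun _ : κ => μ) = ∫ y, f y ∂μ :=
    fun hf _ => integral_comp_eval hf
  have hmul : ∀ i i', AEStronglyMeasurable (fun y => ξ y i * ξ y i') μ :=
    fun i i' => (h.memLp i).aestronglyMeasurable.mul (h.memLp i').aestronglyMeasurable
  refine ⟨fun p => (h.memLp p.2).comp_measurePreserving (measurePreserving_eval _ p.1),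
    fun p => (hcomp (h.memLp p.2).aestronglyMeasurable p.1).trans (h.integral_eq_zero p.2),
    fun p => (hcomp (hmul p.2 p.2) p.1).trans (h.integral_mul_self p.2), ?_⟩
  rintro ⟨j, i⟩ ⟨j', i'⟩ hne
  by_cases hj : j = j'
  · subst hj
    exact (hcomp (hmul i i') j).trans (h.integral_mul_of_ne i i' fun hi => hne (by rw [hi]))
  · have hmap : ∀ j, (Measure.pi fun _ : κ => μ).map (fun g => g j) = μ :=
      fun j => (measurePreserving_eval _ j).map_eq
    have hind : IndepFun (fun g : κ → Ω => ξ (g j) i) (fun g => ξ (g j') i')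
        (Measure.pi fun _ : κ => μ) :=
      ((iIndepFun_pi (X := fun _ (y : Ω) => y) fun _ => aemeasurable_id).indepFun hj).comp₀
        (φ := fun y => ξ y i) (ψ := fun y => ξ y i')
        (measurable_pi_apply j).aemeasurable (measurable_pi_apply j').aemeasurable
        (by rw [hmap]; exact (h.memLp i).aestronglyMeasurable.aemeasurable)
        (by rw [hmap]; exact (h.memLp i').aestronglyMeasurable.aemeasurable)
    rw [hind.integral_fun_mul_eq_mul_integral
      ((h.memLp i).comp_measurePreserving (measurePreserving_eval _ j)).aestronglyMeasurable
      ((h.memLp i').comp_measurePreserving (measurePreserving_eval _ j')).aestronglyMeasurable]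
    simp [hcomp (h.memLp i).aestronglyMeasurable, h.integral_eq_zero]

variable [Fintype ι]

lemma integral_dotProduct_mul_dotProduct (h : IsWhiteNoise μ ξ v) (a b : ι → ℝ) :
    ∫ ω, (a ⬝ᵥ ξ ω) * (b ⬝ᵥ ξ ω) ∂μ = v * (a ⬝ᵥ b) := by
  have hint : ∀ i j, Integrable (fun ω => a i * b j * (ξ ω i * ξ ω j)) μ :=
    fun i j => ((h.memLp i).integrable_mul (h.memLp j)).const_mul _
  have hexp : ∀ ω, (a ⬝ᵥ ξ ω) * (b ⬝ᵥ ξ ω) = ∑ i, ∑ j, a i * b j * (ξ ω i * ξ ω j) := by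
    intro ω
    simp only [dotProduct, Finset.sum_mul, Finset.mul_sum]
    rw [Finset.sum_comm]
    exact Finset.sum_congr rfl fun i _ => Finset.sum_congr rfl fun j _ => by ring
  simp_rw [hexp]
  rw [integral_finsetSum _ fun i _ => integrable_finsetSum _ fun j _ => hint i j]
  simp_rw [integral_finsetSum _ fun j _ => hint _ j, integral_const_mul]
  rw [dotProduct, Finset.mul_sum]
  refine Finset.sum_congr rfl fun i _ => ?_
  rw [Finset.sum_eq_single i (fun j _ hji => by rw [h.integral_mul_of_ne i j hji.symm, mul_zero])
    (by simp), h.integral_mul_self]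
  ring

variable [IsProbabilityMeasure μ]

lemma memLp_affine (h : IsWhiteNoise μ ξ v) (c : ℝ) (a : ι → ℝ) :
    MemLp (fun ω => c + a ⬝ᵥ ξ ω) 2 μ := by
  refine (memLp_const c).add ?_
  simpa [dotProduct] using memLp_finsetSum _ fun i _ => (h.memLp i).const_mul (a i)

lemma integrable_affine_mul_affine (h : IsWhiteNoise μ ξ v) (c c' : ℝ) (a b : ι → ℝ) :
    Integrable (fun ω => (c + a ⬝ᵥ ξ ω) * (c' + b ⬝ᵥ ξ ω)) μ :=
  (h.memLp_affine c a).integrable_mul (h.memLp_affine c' b)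

lemma integral_dotProduct (h : IsWhiteNoise μ ξ v) (a : ι → ℝ) :
    ∫ ω, a ⬝ᵥ ξ ω ∂μ = 0 := by
  simp only [dotProduct]
  rw [integral_finsetSum _ fun i _ => ((h.memLp i).integrable one_le_two).const_mul (a i)]
  simp [integral_const_mul, h.integral_eq_zero]

lemma integral_affine_mul_affine (h : IsWhiteNoise μ ξ v) (c c' : ℝ) (a b : ι → ℝ) :
    ∫ ω, (c + a ⬝ᵥ ξ ω) * (c' + b ⬝ᵥ ξ ω) ∂μ = c * c' + v * (a ⬝ᵥ b) := by
  have ha : Integrable (fun ω => a ⬝ᵥ ξ ω) μ := by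
    simpa using (h.memLp_affine 0 a).integrable one_le_two
  have hb : Integrable (fun ω => b ⬝ᵥ ξ ω) μ := by
    simpa using (h.memLp_affine 0 b).integrable one_le_two
  have hab : Integrable (fun ω => (a ⬝ᵥ ξ ω) * (b ⬝ᵥ ξ ω)) μ := by
    simpa using h.integrable_affine_mul_affine 0 0 a b
  have hlin : Integrable (fun ω => c * (b ⬝ᵥ ξ ω) + c' * (a ⬝ᵥ ξ ω)) μ :=
    (hb.const_mul c).add (ha.const_mul c')
  have hexp : ∀ ω, (c + a ⬝ᵥ ξ ω) * (c' + b ⬝ᵥ ξ ω)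
      = c * c' + (c * (b ⬝ᵥ ξ ω) + c' * (a ⬝ᵥ ξ ω) + (a ⬝ᵥ ξ ω) * (b ⬝ᵥ ξ ω)) :=
    fun ω => by ring
  have hsum : Integrable
      (fun ω => c * (b ⬝ᵥ ξ ω) + c' * (a ⬝ᵥ ξ ω) + (a ⬝ᵥ ξ ω) * (b ⬝ᵥ ξ ω)) μ := hlin.add hab
  simp_rw [hexp]
  rw [integral_add (integrable_const _) hsum, integral_add hlin hab,
    integral_add (hb.const_mul c) (ha.const_mul c')]
  simp [integral_const_mul, h.integral_dotProduct, h.integral_dotProduct_mul_dotProduct]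

variable {m : Type*} [Fintype m]

lemma integrable_quadForm (h : IsWhiteNoise μ ξ v) (u : m → ℝ) (C : Matrix m ι ℝ)
    (S : Matrix m m ℝ) :
    Integrable (fun ω => (u + C *ᵥ ξ ω) ⬝ᵥ S *ᵥ (u + C *ᵥ ξ ω)) μ := by
  simp_rw [affine_dotProduct_mulVec_eq_sum]
  exact integrable_finsetSum _ fun k _ => integrable_finsetSum _ fun l _ =>
    (h.integrable_affine_mul_affine _ _ _ _).const_mul _

lemma integral_quadForm (h : IsWhiteNoise μ ξ v) (u : m → ℝ) (C : Matrix m ι ℝ)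
    (S : Matrix m m ℝ) :
    ∫ ω, (u + C *ᵥ ξ ω) ⬝ᵥ S *ᵥ (u + C *ᵥ ξ ω) ∂μ = u ⬝ᵥ S *ᵥ u + v * trace (Cᵀ * S * C) := by
  have hint : ∀ k l, Integrable
      (fun ω => S k l * ((u k + C k ⬝ᵥ ξ ω) * (u l + C l ⬝ᵥ ξ ω))) μ :=
    fun k l => (h.integrable_affine_mul_affine _ _ _ _).const_mul _
  simp_rw [affine_dotProduct_mulVec_eq_sum]
  rw [integral_finsetSum _ fun k _ => integrable_finsetSum _ fun l _ => hint k l]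
  simp_rw [integral_finsetSum _ fun l _ => hint _ l, integral_const_mul,
    h.integral_affine_mul_affine, dotProduct_mulVec_eq_sum]
  rw [trace_transpose_mul_mul, Finset.mul_sum]
  simp only [Finset.mul_sum, ← Finset.sum_add_distrib]
  exact Finset.sum_congr rfl fun k _ => Finset.sum_congr rfl fun l _ => by ring

end IsWhiteNoise

lemma isWhiteNoise_gaussianReal (v : ℝ≥0) :
    IsWhiteNoise (gaussianReal 0 v) (fun x (_ : Unit) => x) v where
  memLp _ := memLp_id_gaussianReal 2
  integral_eq_zero _ := integral_id_gaussianReal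
  integral_mul_self _ := by
    rw [← variance_fun_id_gaussianReal (μ := 0),
      variance_of_integral_eq_zero aemeasurable_id' integral_id_gaussianReal]
    simp [sq]
  integral_mul_of_ne _ _ h := absurd (Subsingleton.elim _ _) h

lemma isWhiteNoise_pi_pi_gaussianReal (ι κ : Type*) [Fintype ι] [Fintype κ] (v : ℝ≥0) :
    IsWhiteNoise (Measure.pi fun _ : ι => Measure.pi fun _ : κ => gaussianReal 0 v)
      (fun g (p : ι × κ) => g p.1 p.2) v :=
  (((isWhiteNoise_gaussianReal v).pi κ).comp_injective
    (f := fun i => (i, ())) fun _ _ h => congrArg Prod.fst h).pi ι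

section Trajectory

variable {t d : ℕ}

lemma stateTraj_succ (M : Matrix (Fin d) (Fin d) ℝ) (x₁ : Fin d → ℝ) (w : ℕ → Fin d → ℝ)
    (n : ℕ) :
    stateTraj M x₁ w (n + 1) = M ^ n *ᵥ x₁ + ∑ e ∈ Finset.range n, M ^ e *ᵥ w (n - e) := by
  induction n with
  | zero => simp [stateTraj]
  | succ n ih =>
    rw [stateTraj, ih, mulVec_add, mulVec_sum, Finset.sum_range_succ', add_assoc]
    simp [mulVec_mulVec, ← pow_succ']

lemma noiseExt_of_le (g : Fin t → Fin d → ℝ) {s : ℕ} (h1 : 1 ≤ s) (h2 : s ≤ t) :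
    noiseExt g s = g ⟨s - 1, by omega⟩ :=
  dif_pos ⟨h1, h2⟩

/-- The block `M ^ e` multiplies `w (n - e) = g (n - 1 - e)`, whence the reversal `Fin.rev`. -/
lemma stateTraj_noiseExt (M : Matrix (Fin d) (Fin d) ℝ) (x₁ : Fin d → ℝ)
    (g : Fin t → Fin d → ℝ) {n : ℕ} (hn : n ≤ t) :
    stateTraj M x₁ (noiseExt g) (n + 1) = M ^ n *ᵥ x₁
      + blockRow (fun e : Fin n => M ^ (e : ℕ)) *ᵥ fun p => g (Fin.castLE hn p.1.rev) p.2 := by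
  rw [stateTraj_succ, blockRow_mulVec, Finset.sum_range]
  congr 1
  refine Finset.sum_congr rfl fun e _ => ?_
  rw [noiseExt_of_le g (by omega) (by omega)]
  congr 2

variable {μ : Measure (Fin t → Fin d → ℝ)} {v : ℝ}

lemma IsWhiteNoise.comp_castLE_rev (hμ : IsWhiteNoise μ (fun g (p : Fin t × Fin d) => g p.1 p.2) v)
    {n : ℕ} (hn : n ≤ t) :
    IsWhiteNoise μ (fun g (p : Fin n × Fin d) => g (Fin.castLE hn p.1.rev) p.2) v :=
  hμ.comp_injective (f := fun p : Fin n × Fin d => (Fin.castLE hn p.1.rev, p.2))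
    ((Fin.castLE_injective hn).comp Fin.rev_injective |>.prodMap Function.injective_id)

variable [IsProbabilityMeasure μ]

lemma integrable_quadForm_stateTraj
    (hμ : IsWhiteNoise μ (fun g (p : Fin t × Fin d) => g p.1 p.2) v)
    (M S : Matrix (Fin d) (Fin d) ℝ) (x₁ : Fin d → ℝ) {n : ℕ} (hn : n ≤ t) :
    Integrable (fun g => stateTraj M x₁ (noiseExt g) (n + 1) ⬝ᵥ
      S *ᵥ stateTraj M x₁ (noiseExt g) (n + 1)) μ := by
  simp_rw [stateTraj_noiseExt M x₁ _ hn]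
  exact (hμ.comp_castLE_rev hn).integrable_quadForm _ _ _

lemma integral_quadForm_stateTraj
    (hμ : IsWhiteNoise μ (fun g (p : Fin t × Fin d) => g p.1 p.2) v)
    (M S : Matrix (Fin d) (Fin d) ℝ) (x₁ : Fin d → ℝ) {n : ℕ} (hn : n ≤ t) :
    ∫ g, stateTraj M x₁ (noiseExt g) (n + 1) ⬝ᵥ S *ᵥ stateTraj M x₁ (noiseExt g) (n + 1) ∂μ
      = (M ^ n *ᵥ x₁) ⬝ᵥ S *ᵥ (M ^ n *ᵥ x₁)
        + v * ∑ e ∈ Finset.range n, trace ((M ^ e)ᵀ * S * M ^ e) := by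
  simp_rw [stateTraj_noiseExt M x₁ _ hn]
  rw [(hμ.comp_castLE_rev hn).integral_quadForm, trace_blockRow, Finset.sum_range]

lemma integral_sum_quadForm_stateTraj
    (hμ : IsWhiteNoise μ (fun g (p : Fin t × Fin d) => g p.1 p.2) v)
    (M S : Matrix (Fin d) (Fin d) ℝ) (x₁ : Fin d → ℝ) :
    ∫ g, (∑ s ∈ Finset.Icc 1 t,
        stateTraj M x₁ (noiseExt g) s ⬝ᵥ S *ᵥ stateTraj M x₁ (noiseExt g) s) ∂μ
      = ∑ n ∈ Finset.range t, ((M ^ n *ᵥ x₁) ⬝ᵥ S *ᵥ (M ^ n *ᵥ x₁)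
        + v * ∑ e ∈ Finset.range n, trace ((M ^ e)ᵀ * S * M ^ e)) := by
  have hIcc : ∀ f : ℕ → ℝ, ∑ s ∈ Finset.Icc 1 t, f s = ∑ n ∈ Finset.range t, f (n + 1) :=
    fun f => by rw [Finset.range_eq_Ico, Finset.sum_Ico_add']; rfl
  simp_rw [hIcc]
  rw [integral_finsetSum _ fun n hn =>
    integrable_quadForm_stateTraj hμ M S x₁ (Finset.mem_range.mp hn).le]
  exact Finset.sum_congr rfl fun n hn =>
    integral_quadForm_stateTraj hμ M S x₁ (Finset.mem_range.mp hn).le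

end Trajectory

theorem finite_horizon_cost_bound_general (d k : ℕ) (σ κ γ α₁ : ℝ)
    (A : Matrix (Fin d) (Fin d) ℝ) (B : Matrix (Fin d) (Fin k) ℝ)
    (K : Matrix (Fin k) (Fin d) ℝ) (hK : opNorm K ≤ κ)
    (hM : StronglyStable κ γ (A + B * K))
    (Q : Matrix (Fin d) (Fin d) ℝ) (R : Matrix (Fin k) (Fin k) ℝ)
    (hQn : opNorm Q ≤ α₁) (hRn : opNorm R ≤ α₁)
    (P : Matrix (Fin d) (Fin d) ℝ) (hP : P.PosDef)
    (hLyap : P = Q + Kᵀ * R * K + (A + B * K)ᵀ * P * (A + B * K))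
    (x₁ : Fin d → ℝ) (t : ℕ) :
    ∫ g : Fin t → Fin d → ℝ,
        (∑ s ∈ Finset.Icc 1 t,
          dotProduct (stateTraj (A + B * K) x₁ (noiseExt g) s)
            ((Q + Kᵀ * R * K).mulVec (stateTraj (A + B * K) x₁ (noiseExt g) s)))
        ∂(Measure.pi fun _ : Fin t =>
            (Measure.pi fun _ : Fin d => gaussianReal 0 ⟨σ ^ 2, sq_nonneg σ⟩))
      ≤ t * σ ^ 2 * Matrix.trace P + (2 * α₁ * κ ^ 4 / γ) * ∑ i, x₁ i ^ 2 := by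
  have hpow := hM.norm_pow_le
  obtain ⟨hκ, hγ, hγ1, -⟩ := hM
  rw [opNorm_eq_norm] at hK hQn hRn
  have hS := norm_add_transpose_mul_mul_le hκ hK hQn hRn
  have hPn : ‖P‖ ≤ 2 * α₁ * κ ^ 4 / γ :=
    calc ‖P‖ ≤ ‖Q + Kᵀ * R * K‖ * κ ^ 2 / (1 - (1 - γ) ^ 2) :=
          norm_le_of_lyapunov hLyap (sub_nonneg.2 hγ1) (by linarith) hpow
      _ ≤ ‖Q + Kᵀ * R * K‖ * κ ^ 2 / γ := by
          gcongr
          nlinarith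
      _ ≤ 2 * α₁ * κ ^ 2 * κ ^ 2 / γ := by gcongr
      _ = 2 * α₁ * κ ^ 4 / γ := by ring
  calc _ = _ := integral_sum_quadForm_stateTraj (isWhiteNoise_pi_pi_gaussianReal _ _ _) _ _ x₁
    _ ≤ x₁ ⬝ᵥ P *ᵥ x₁ + t * σ ^ 2 * trace P :=
        sum_cost_le_of_lyapunov hLyap hP.posSemidef (sq_nonneg σ) x₁ t
    _ ≤ _ := by
        have hx := (dotProduct_mulVec_le P x₁).trans
          (mul_le_mul_of_nonneg_right hPn (Finset.sum_nonneg fun i _ => sq_nonneg (x₁ i)))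
        linarith

/-- **Lemma (finite-horizon cost of a strongly stable controller vs. steady state).**
Let `K` with `‖K‖ ≤ κ` be such that `M = A + BK` is `(κ,γ)`-strongly stable, let
`Q, R ⪰ 0` with `‖Q‖, ‖R‖ ≤ α₁`, and let `P ≻ 0` solve the Lyapunov equation
`P = Q + KᵀRK + MᵀPM`.  Starting from `x₁` and evolving with i.i.d. `N(0,σ²I)`
Gaussian noise `x_{s+1} = M x_s + w_s`, for every `t ≥ 1`:
`E[Σ_{s=1}^t x_sᵀ(Q+KᵀRK)x_s] ≤ t·σ²·tr(P) + (2α₁κ⁴/γ)·‖x₁‖²`. -/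
theorem finite_horizon_cost_bound (d k : ℕ) (σ κ γ α₁ : ℝ) (hσ : 0 < σ)
    (A : Matrix (Fin d) (Fin d) ℝ) (B : Matrix (Fin d) (Fin k) ℝ)
    (K : Matrix (Fin k) (Fin d) ℝ) (hK : opNorm K ≤ κ)
    (hM : StronglyStable κ γ (A + B * K))
    (Q : Matrix (Fin d) (Fin d) ℝ) (R : Matrix (Fin k) (Fin k) ℝ)
    (hQ : Q.PosSemidef) (hR : R.PosSemidef)
    (hQn : opNorm Q ≤ α₁) (hRn : opNorm R ≤ α₁)
    (P : Matrix (Fin d) (Fin d) ℝ) (hP : P.PosDef)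
    (hLyap : P = Q + Kᵀ * R * K + (A + B * K)ᵀ * P * (A + B * K))
    (x₁ : Fin d → ℝ) (t : ℕ) (ht : 1 ≤ t) :
    ∫ g : Fin t → Fin d → ℝ,
        (∑ s ∈ Finset.Icc 1 t,
          dotProduct (stateTraj (A + B * K) x₁ (noiseExt g) s)
            ((Q + Kᵀ * R * K).mulVec (stateTraj (A + B * K) x₁ (noiseExt g) s)))
        ∂(Measure.pi fun _ : Fin t =>
            (Measure.pi fun _ : Fin d => gaussianReal 0 ⟨σ ^ 2, sq_nonneg σ⟩))
      ≤ t * σ ^ 2 * Matrix.trace P + (2 * α₁ * κ ^ 4 / γ) * ∑ i, x₁ i ^ 2 :=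
  finite_horizon_cost_bound_general d k σ κ γ α₁ A B K hK hM Q R hQn hRn P hP hLyap x₁ t

end
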